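/- Let q, n ≥ 2 be integers and 0 < ε < (q−1)/2. If ℓ is an integer with ℓ ≤ n+1 and ℓ ≥ ((q−1)²/ε²)·ln(2(n+1)√q), then there are at least q^n/2 sequences x ∈ Σ_q^n such that ψ(x) is strong-(ℓ,ε)-locally-balanced. -/

import Mathlib

/-- The L1-weight of the length-`len` substring of `y` starting at 0-based position `a`. -/
def wsub {q m : ℕ} (y : Fin m → ZMod q) (a len : ℕ) (h : a + len ≤ m) : ℕ :=
  ∑ i : Fin len, (y ⟨a + (i : ℕ), by omega⟩).val

/-- `y` is strong-(ℓ,ε)-locally-balanced. -/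
def StrongLB {q m : ℕ} (y : Fin m → ZMod q) (ℓ : ℕ) (ε : ℝ) : Prop :=
  ∀ a len : ℕ, ℓ ≤ len → ∀ h : a + len ≤ m,
    (((q : ℝ) - 1) / 2 - ε) * (len : ℝ) ≤ (wsub y a len h : ℝ) ∧
    (wsub y a len h : ℝ) ≤ (((q : ℝ) - 1) / 2 + ε) * (len : ℝ)

/-- The symbol `x_k` (1-based index), with the convention `x_0 = x_{n+1} = 0`. -/
def xpad {q n : ℕ} (x : Fin n → ZMod q) (k : ℕ) : ZMod q :=
  if h : 1 ≤ k ∧ k ≤ n then x ⟨k - 1, by omega⟩ else 0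

/-- The differential sequence `ψ(x) ∈ Σ_q^{n+1}`. -/
def psi {q n : ℕ} (x : Fin n → ZMod q) : Fin (n + 1) → ZMod q :=
  fun j => xpad x (j : ℕ) - xpad x ((j : ℕ) + 1)

/-!
Since `ψ` is injective it suffices to count the `y ∈ Σ_q^{n+1}` having an unbalanced window.
Hoeffding's estimate `∑_{v < q} e^{t (v - (q-1)/2)} ≤ q e^{t² (q-1)² / 8}` (pair `v` with
`q - 1 - v` and use `cosh x ≤ e^{x²/2}`) and the Chernoff bound show that a fixed window of
length `L ≥ ℓ` is unbalanced for at most `2 q^{n+1} e^{-2ε²L/(q-1)²} ≤ 2 q^{n+1} / (2(n+1)√q)²`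
sequences. A union bound over the at most `(n+1)²` windows leaves at most `q^n / 2` bad `x`.
-/

open Finset Real

lemma sum_range_exp_mul_sub_le (q : ℕ) (t : ℝ) :
    ∑ k ∈ range q, exp (t * (k - ((q : ℝ) - 1) / 2)) ≤
      q * exp (t ^ 2 * ((q : ℝ) - 1) ^ 2 / 8) := by
  set u : ℕ → ℝ := fun k ↦ t * (k - ((q : ℝ) - 1) / 2)
  have reflect : ∀ k ∈ range q, u (q - 1 - k) = -u k := by
    intro k hk
    rw [mem_range] at hk
    simp only [u]
    rw [Nat.cast_sub (by omega), Nat.cast_sub (by omega)]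
    push_cast
    ring
  have sq_le : ∀ k ∈ range q, u k ^ 2 / 2 ≤ t ^ 2 * ((q : ℝ) - 1) ^ 2 / 8 := by
    intro k hk
    have hk' : (k : ℝ) + 1 ≤ q := by exact_mod_cast mem_range.1 hk
    have hk0 : (0 : ℝ) ≤ k := k.cast_nonneg
    simp only [u]
    nlinarith [mul_nonneg (mul_nonneg (sq_nonneg t) hk0) (by linarith : (0 : ℝ) ≤ q - 1 - k)]
  have pairing : 2 * ∑ k ∈ range q, exp (u k) = ∑ k ∈ range q, 2 * cosh (u k) := by
    rw [two_mul]
    nth_rw 2 [← sum_range_reflect]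
    rw [← sum_add_distrib]
    refine sum_congr rfl fun k hk ↦ ?_
    rw [reflect k hk, cosh_eq]
    ring
  have : 2 * ∑ k ∈ range q, exp (u k) ≤ 2 * (q * exp (t ^ 2 * ((q : ℝ) - 1) ^ 2 / 8)) := by
    calc 2 * ∑ k ∈ range q, exp (u k)
        = ∑ k ∈ range q, 2 * cosh (u k) := pairing
      _ ≤ ∑ _k ∈ range q, 2 * exp (t ^ 2 * ((q : ℝ) - 1) ^ 2 / 8) := by
          gcongr with k hk
          exact (cosh_le_exp_half_sq _).trans (exp_le_exp.2 (sq_le k hk))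
      _ = 2 * (q * exp (t ^ 2 * ((q : ℝ) - 1) ^ 2 / 8)) := by
          rw [sum_const, card_range, nsmul_eq_mul]; ring
  linarith

lemma sum_zmod_exp_mul_sub_le (q : ℕ) [NeZero q] (t : ℝ) :
    ∑ v : ZMod q, exp (t * ((v.val : ℝ) - ((q : ℝ) - 1) / 2)) ≤
      q * exp (t ^ 2 * ((q : ℝ) - 1) ^ 2 / 8) := by
  refine le_of_eq_of_le ?_ (sum_range_exp_mul_sub_le q t)
  refine sum_nbij' ZMod.val (fun k ↦ (k : ZMod q)) (fun v _ ↦ mem_range.2 (ZMod.val_lt v))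
    (fun _ _ ↦ mem_univ _) (fun v _ ↦ ZMod.natCast_zmod_val v)
    (fun k hk ↦ ZMod.val_cast_of_lt (mem_range.1 hk)) (fun _ _ ↦ rfl)

-- `(q - 1) / 2` is the mean of a uniformly random symbol of `Σ_q`.
noncomputable def centeredWeight {q L : ℕ} (z : Fin L → ZMod q) : ℝ :=
  ∑ i, (((z i).val : ℝ) - ((q : ℝ) - 1) / 2)

lemma sum_exp_mul_centeredWeight_le (q L : ℕ) [NeZero q] (t : ℝ) :
    ∑ z : Fin L → ZMod q, exp (t * centeredWeight z) ≤
      (q * exp (t ^ 2 * ((q : ℝ) - 1) ^ 2 / 8)) ^ L := by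
  calc ∑ z : Fin L → ZMod q, exp (t * centeredWeight z)
      = (∑ v : ZMod q, exp (t * ((v.val : ℝ) - ((q : ℝ) - 1) / 2))) ^ L := by
        simp only [Fintype.sum_pow, centeredWeight, mul_sum, exp_sum]
    _ ≤ _ := pow_le_pow_left₀ (by positivity) (sum_zmod_exp_mul_sub_le q t) L

lemma card_filter_le_le_exp_neg_mul_sum {α : Type*} [Fintype α] (g : α → ℝ) (c : ℝ)
    [DecidablePred fun a ↦ c ≤ g a] :
    (#{a | c ≤ g a} : ℝ) ≤ exp (-c) * ∑ a, exp (g a) := by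
  rw [exp_neg, inv_mul_eq_div, le_div_iff₀ (exp_pos c)]
  calc (#{a | c ≤ g a} : ℝ) * exp c = ∑ _a ∈ {a | c ≤ g a}, exp c := by
        rw [sum_const, nsmul_eq_mul]
    _ ≤ ∑ a ∈ {a | c ≤ g a}, exp (g a) :=
        sum_le_sum fun a ha ↦ exp_le_exp.2 (mem_filter.1 ha).2
    _ ≤ ∑ a, exp (g a) :=
        sum_le_sum_of_subset_of_nonneg (subset_univ _) fun _ _ _ ↦ (exp_pos _).le

lemma card_le_mul_centeredWeight_le {q : ℕ} [NeZero q] (hq : q ≠ 1) {ε σ : ℝ} (hε : 0 ≤ ε)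
    (hσ : σ ^ 2 = 1) (L : ℕ) :
    (#{z : Fin L → ZMod q | ε * L ≤ σ * centeredWeight z} : ℝ) ≤
      q ^ L * exp (-2 * ε ^ 2 * L / ((q : ℝ) - 1) ^ 2) := by
  have hq1 : (0 : ℝ) < (q : ℝ) - 1 := by
    have : (1 : ℝ) < q := by exact_mod_cast (NeZero.one_le).lt_of_ne' hq
    linarith
  -- the Chernoff parameter minimising `-t ε L + L t² (q - 1)² / 8`
  set t := 4 * ε / ((q : ℝ) - 1) ^ 2 with ht
  have ht0 : 0 ≤ t := by positivity
  calc (#{z : Fin L → ZMod q | ε * L ≤ σ * centeredWeight z} : ℝ)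
      ≤ #{z : Fin L → ZMod q | t * (ε * L) ≤ t * σ * centeredWeight z} := by
        refine Nat.cast_le.2 (card_le_card (monotone_filter_right _ fun z _ hz ↦ ?_))
        rw [mul_assoc]
        exact mul_le_mul_of_nonneg_left hz ht0
    _ ≤ exp (-(t * (ε * L))) * ∑ z : Fin L → ZMod q, exp (t * σ * centeredWeight z) :=
        card_filter_le_le_exp_neg_mul_sum _ _
    _ ≤ exp (-(t * (ε * L))) * (q * exp ((t * σ) ^ 2 * ((q : ℝ) - 1) ^ 2 / 8)) ^ L := by
        gcongr
        exact sum_exp_mul_centeredWeight_le q L _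
    _ = q ^ L * exp (-2 * ε ^ 2 * L / ((q : ℝ) - 1) ^ 2) := by
        rw [mul_pow, ← exp_nat_mul, mul_left_comm, ← exp_add, mul_pow, hσ, ht]
        congr 2
        field_simp
        ring

lemma card_abs_centeredWeight_gt_le {q : ℕ} [NeZero q] (hq : q ≠ 1) {ε : ℝ} (hε : 0 ≤ ε)
    (L : ℕ) :
    (#{z : Fin L → ZMod q | ε * L < |centeredWeight z|} : ℝ) ≤
      2 * q ^ L * exp (-2 * ε ^ 2 * L / ((q : ℝ) - 1) ^ 2) := by
  let tail (σ : ℝ) : Finset (Fin L → ZMod q) := {z | ε * L ≤ σ * centeredWeight z}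
  have split : ({z | ε * L < |centeredWeight z|} : Finset (Fin L → ZMod q)) ⊆
      tail 1 ∪ tail (-1) := by
    intro z hz
    simp only [tail, mem_filter, mem_union, mem_univ, true_and] at hz ⊢
    rcases lt_abs.1 hz with h | h
    · exact Or.inl (by linarith)
    · exact Or.inr (by linarith)
  have hcard := Nat.cast_le (α := ℝ) |>.2 ((card_le_card split).trans (card_union_le _ _))
  have upper : (#(tail 1) : ℝ) ≤ _ := card_le_mul_centeredWeight_le hq hε (one_pow 2) L
  have lower : (#(tail (-1)) : ℝ) ≤ _ := card_le_mul_centeredWeight_le hq hε (neg_one_sq) L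
  rw [Nat.cast_add] at hcard
  linarith

lemma card_filter_comp_embedding_le {ι κ α : Type*} [Fintype ι] [DecidableEq ι] [Fintype κ]
    [DecidableEq κ] [Fintype α] (e : ι ↪ κ) (P : (ι → α) → Prop) [DecidablePred P] :
    #{y : κ → α | P (y ∘ e)} ≤
      #{z | P z} * Fintype.card α ^ (Fintype.card κ - Fintype.card ι) := by
  classical
  let restrict (y : κ → α) : (ι → α) × ({k // k ∉ Set.range e} → α) :=
    (y ∘ e, fun k ↦ y k)
  have hinj : Function.Injective restrict := by
    intro y y' h
    simp only [restrict, Prod.mk.injEq] at h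
    funext k
    by_cases hk : k ∈ Set.range e
    · obtain ⟨i, rfl⟩ := hk
      exact congr_fun h.1 i
    · exact congr_fun h.2 ⟨k, hk⟩
  calc #{y : κ → α | P (y ∘ e)}
      ≤ (({z | P z} : Finset (ι → α)) ×ˢ (univ : Finset ({k // k ∉ Set.range e} → α))).card :=
        card_le_card_of_injOn restrict
          (fun y hy ↦ mem_product.2 ⟨by simpa [restrict] using hy, mem_univ _⟩) hinj.injOn
    _ = _ := by
        rw [card_product, card_univ, Fintype.card_fun, Fintype.card_subtype_compl,
          Set.card_range_of_injective e.injective]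

lemma wsub_sub_eq_centeredWeight {q m : ℕ} (y : Fin m → ZMod q) (a len : ℕ) (h : a + len ≤ m) :
    (wsub y a len h : ℝ) - ((q : ℝ) - 1) / 2 * len =
      centeredWeight (y ∘ (Fin.natAddEmb a).trans (Fin.castLEEmb h)) := by
  simp only [wsub, centeredWeight, Nat.cast_sum, sum_sub_distrib, sum_const, card_univ,
    Fintype.card_fin, nsmul_eq_mul, mul_comm]
  rfl

lemma card_window_unbalanced_le {q : ℕ} [NeZero q] (hq : q ≠ 1) {ε : ℝ} (hε : 0 ≤ ε)
    {m : ℕ} (a len : ℕ) (h : a + len ≤ m) :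
    (#{y : Fin m → ZMod q | ε * len < |(wsub y a len h : ℝ) - ((q : ℝ) - 1) / 2 * len|} : ℝ) ≤
      2 * q ^ m * exp (-2 * ε ^ 2 * len / ((q : ℝ) - 1) ^ 2) := by
  let e := (Fin.natAddEmb a).trans (Fin.castLEEmb h)
  have hcount :=
    card_filter_comp_embedding_le e fun z : Fin len → ZMod q ↦ ε * len < |centeredWeight z|
  simp only [Fintype.card_fin, ZMod.card] at hcount
  simp only [wsub_sub_eq_centeredWeight]
  calc (#{y : Fin m → ZMod q | ε * len < |centeredWeight (y ∘ e)|} : ℝ)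
      ≤ #{z : Fin len → ZMod q | ε * len < |centeredWeight z|} * (q : ℝ) ^ (m - len) := by
        exact_mod_cast hcount
    _ ≤ 2 * q ^ len * exp (-2 * ε ^ 2 * len / ((q : ℝ) - 1) ^ 2) * (q : ℝ) ^ (m - len) := by
        gcongr
        exact card_abs_centeredWeight_gt_le hq hε len
    _ = 2 * q ^ m * exp (-2 * ε ^ 2 * len / ((q : ℝ) - 1) ^ 2) := by
        rw [show m = len + (m - len) by omega, pow_add, Nat.add_sub_cancel_left]
        ring

lemma strongLB_iff_abs_sub_le {q m : ℕ} (y : Fin m → ZMod q) (ℓ : ℕ) (ε : ℝ) :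
    StrongLB y ℓ ε ↔ ∀ a len : ℕ, ℓ ≤ len → ∀ h : a + len ≤ m,
      |(wsub y a len h : ℝ) - ((q : ℝ) - 1) / 2 * len| ≤ ε * len := by
  refine forall₄_congr fun a len _ h ↦ ?_
  rw [abs_sub_le_iff]
  constructor <;> rintro ⟨h₁, h₂⟩ <;> constructor <;> linarith

lemma card_not_strongLB_le {q : ℕ} [NeZero q] (hq : q ≠ 1) {ε : ℝ} (hε : 0 ≤ ε) (m ℓ : ℕ)
    [DecidablePred fun y : Fin m → ZMod q ↦ StrongLB y ℓ ε] :
    (#{y : Fin m → ZMod q | ¬ StrongLB y ℓ ε} : ℝ) ≤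
      m ^ 2 * (2 * q ^ m * exp (-2 * ε ^ 2 * ℓ / ((q : ℝ) - 1) ^ 2)) := by
  let windows : Finset (ℕ × ℕ) :=
    (range m ×ˢ Icc 1 m).filter fun p ↦ ℓ ≤ p.2 ∧ p.1 + p.2 ≤ m
  let unbalanced (p : ℕ × ℕ) : Finset (Fin m → ZMod q) :=
    {y | ∃ h : p.1 + p.2 ≤ m, ε * p.2 < |(wsub y p.1 p.2 h : ℝ) - ((q : ℝ) - 1) / 2 * p.2|}
  have cover : ({y | ¬ StrongLB y ℓ ε} : Finset (Fin m → ZMod q)) ⊆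
      windows.biUnion unbalanced := by
    intro y hy
    simp only [mem_filter, mem_univ, true_and, strongLB_iff_abs_sub_le, not_forall,
      not_le] at hy
    obtain ⟨a, len, hℓlen, h, hlt⟩ := hy
    have hlen : len ≠ 0 := by
      rintro rfl
      simp [wsub] at hlt
    refine mem_biUnion.2 ⟨(a, len), ?_, mem_filter.2 ⟨mem_univ _, h, hlt⟩⟩
    simp only [windows, mem_filter, mem_product, mem_range, mem_Icc]
    omega
  have hwindows : (#windows : ℝ) ≤ m ^ 2 := by
    have : #windows ≤ m * m := by
      simpa using card_filter_le (range m ×ˢ Icc 1 m) _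
    rw [sq]
    exact_mod_cast this
  have hunbalanced : ∀ p ∈ windows, (#(unbalanced p) : ℝ) ≤
      2 * q ^ m * exp (-2 * ε ^ 2 * ℓ / ((q : ℝ) - 1) ^ 2) := by
    intro p hp
    obtain ⟨hℓp, hpm⟩ := (mem_filter.1 hp).2
    calc (#(unbalanced p) : ℝ)
        ≤ #{y : Fin m → ZMod q | ε * p.2 < |(wsub y p.1 p.2 hpm : ℝ) - ((q : ℝ) - 1) / 2 * p.2|} :=
          Nat.cast_le.2 (card_le_card fun y hy ↦ by
            obtain ⟨_, hy⟩ := (mem_filter.1 hy).2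
            exact mem_filter.2 ⟨mem_univ _, hy⟩)
      _ ≤ 2 * q ^ m * exp (-2 * ε ^ 2 * p.2 / ((q : ℝ) - 1) ^ 2) :=
          card_window_unbalanced_le hq hε p.1 p.2 hpm
      _ ≤ 2 * q ^ m * exp (-2 * ε ^ 2 * ℓ / ((q : ℝ) - 1) ^ 2) := by
          gcongr 2 * _ * exp ?_
          simp only [neg_mul, neg_div, neg_le_neg_iff]
          gcongr
  calc (#{y : Fin m → ZMod q | ¬ StrongLB y ℓ ε} : ℝ) ≤ ∑ p ∈ windows, (#(unbalanced p) : ℝ) := by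
        exact_mod_cast (card_le_card cover).trans card_biUnion_le
    _ ≤ ∑ _p ∈ windows, 2 * q ^ m * exp (-2 * ε ^ 2 * ℓ / ((q : ℝ) - 1) ^ 2) :=
        sum_le_sum hunbalanced
    _ ≤ _ := by
        rw [sum_const, nsmul_eq_mul]
        gcongr

lemma xpad_succ {q n : ℕ} (x : Fin n → ZMod q) (i : Fin n) : xpad x (i + 1) = x i :=
  dif_pos ⟨by omega, i.isLt⟩

lemma psi_injective (q n : ℕ) : Function.Injective (psi : (Fin n → ZMod q) → _) := by
  intro x x' h
  have hxpad : ∀ k ≤ n, xpad x k = xpad x' k := by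
    intro k
    induction k with
    | zero => simp [xpad]
    | succ k ih =>
      intro hk
      have hk' := congr_fun h ⟨k, by omega⟩
      simp only [psi, ih (by omega)] at hk'
      exact sub_right_injective hk'
  funext i
  rw [← xpad_succ x, ← xpad_succ x', hxpad _ i.isLt]

lemma exp_neg_two_mul_div_le_inv_sq {ε c s ℓ : ℝ} (hε : ε ≠ 0) (hc : c ≠ 0) (hs : 0 < s)
    (h : c ^ 2 / ε ^ 2 * log s ≤ ℓ) :
    exp (-2 * ε ^ 2 * ℓ / c ^ 2) ≤ (s ^ 2)⁻¹ := by
  rw [← exp_log (pow_pos hs 2), ← exp_neg, exp_le_exp, log_pow]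
  simp only [neg_mul, neg_div, neg_le_neg_iff]
  rw [le_div_iff₀ (by positivity)]
  rw [div_mul_eq_mul_div, div_le_iff₀ (by positivity)] at h
  push_cast
  linarith

lemma card_sub_le_natCard_subtype {α : Type*} [Fintype α] (P : α → Prop) [DecidablePred P]
    {B : ℝ} (h : (#{x | ¬ P x} : ℝ) ≤ B) :
    (Fintype.card α : ℝ) - B ≤ Nat.card {x // P x} := by
  have hsplit := card_filter_add_card_filter_not (s := univ) P
  rw [card_univ] at hsplit
  rw [Nat.card_eq_fintype_card, Fintype.card_subtype, ← hsplit]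
  push_cast
  linarith

theorem stmt4_general (q n : ℕ) (hq : 2 ≤ q) (ε : ℝ)
    (hε0 : 0 < ε)
    (ℓ : ℕ)
    (hℓ : ((q : ℝ) - 1) ^ 2 / ε ^ 2 * Real.log (2 * ((n : ℝ) + 1) * Real.sqrt q) ≤ (ℓ : ℝ)) :
    (q : ℝ) ^ n / 2 ≤
      (Nat.card {x : Fin n → ZMod q // StrongLB (psi x) ℓ ε} : ℝ) := by
  classical
  have : NeZero q := ⟨by omega⟩
  have hq1 : (q : ℝ) - 1 ≠ 0 := by
    have : (2 : ℝ) ≤ q := by exact_mod_cast hq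
    linarith
  set s := 2 * ((n : ℝ) + 1) * √q
  have hdecay := exp_neg_two_mul_div_le_inv_sq hε0.ne' hq1 (by positivity) hℓ
  have hbad : (#{x : Fin n → ZMod q | ¬ StrongLB (psi x) ℓ ε} : ℝ) ≤ (q : ℝ) ^ n / 2 :=
    calc (#{x : Fin n → ZMod q | ¬ StrongLB (psi x) ℓ ε} : ℝ)
        ≤ #{y : Fin (n + 1) → ZMod q | ¬ StrongLB y ℓ ε} :=
          Nat.cast_le.2 (card_le_card_of_injOn psi (fun x hx ↦ by simpa using hx)
            (psi_injective q n).injOn)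
      _ ≤ ((n + 1 : ℕ) : ℝ) ^ 2 * (2 * q ^ (n + 1) * exp (-2 * ε ^ 2 * ℓ / ((q : ℝ) - 1) ^ 2)) :=
          card_not_strongLB_le (by omega) hε0.le (n + 1) ℓ
      _ ≤ ((n + 1 : ℕ) : ℝ) ^ 2 * (2 * q ^ (n + 1) * (s ^ 2)⁻¹) := by gcongr
      _ = (q : ℝ) ^ n / 2 := by
          simp only [s, mul_pow, sq_sqrt (Nat.cast_nonneg q)]
          field_simp
          push_cast
          ring
  have hgood := card_sub_le_natCard_subtype _ hbad
  rw [Fintype.card_fun, ZMod.card, Fintype.card_fin] at hgood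
  push_cast at hgood
  linarith

theorem stmt4 (q n : ℕ) (hq : 2 ≤ q) (hn : 2 ≤ n) (ε : ℝ)
    (hε0 : 0 < ε) (hε : ε < ((q : ℝ) - 1) / 2)
    (ℓ : ℕ) (hℓn : ℓ ≤ n + 1)
    (hℓ : ((q : ℝ) - 1) ^ 2 / ε ^ 2 * Real.log (2 * ((n : ℝ) + 1) * Real.sqrt q) ≤ (ℓ : ℝ)) :
    (q : ℝ) ^ n / 2 ≤
      (Nat.card {x : Fin n → ZMod q // StrongLB (psi x) ℓ ε} : ℝ) :=
  stmt4_general q n hq ε hε0 ℓ hℓ
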